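/- arXiv:1810.03646 — 9 statements merged into one kernel-verified Lean document; each statement's English description precedes it below -/
import Mathlib

section
/- Let k be a field and K a field extension of k of degree d with basis u_1,…,u_d over k. For every polynomial F ∈ K[x_1,…,x_n] there exists a unique d-tuple (f_1,…,f_d) of polynomials in k[y_{tj} : 1≤t≤n, 1≤j≤d] such that F(Σ_{j=1}^d y_{1j}u_j, …, Σ_{j=1}^d y_{nj}u_j) = Σ_{i=1}^d f_i·u_i holds in K[y_{tj} : 1≤t≤n, 1≤j≤d] (where each f_i is viewed in K[y_{tj}] via the inclusion k ⊆ K). -/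
/-!
Comparing coefficients of a monomial `m`, the identity `G = ∑ i, u i • f i` says
`coeff m G = ∑ i, coeff m (f i) • u i`. Hence the `f i` are forced to be the polynomials whose
coefficients are the coordinates, in the basis `u`, of the coefficients of `G`, and these work.
-/

open MvPolynomial

namespace MvPolynomial

variable {σ ι k K : Type*} [CommSemiring k] [CommSemiring K] [Algebra k K]

theorem coeff_sum_C_mul_map [Fintype ι] (u : ι → K) (f : ι → MvPolynomial σ k)
    (m : σ →₀ ℕ) :
    coeff m (∑ i, C (u i) * map (algebraMap k K) (f i)) = ∑ i, coeff m (f i) • u i := by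
  simp only [coeff_sum, coeff_C_mul, coeff_map, Algebra.smul_def, mul_comm]

theorem sum_C_mul_map_injective [Fintype ι] {u : ι → K} (hu : LinearIndependent k u) :
    Function.Injective fun f : ι → MvPolynomial σ k ↦
      ∑ i, C (u i) * map (algebraMap k K) (f i) := by
  intro f g hfg
  funext i
  ext m
  have hcoeff := congrArg (coeff m) hfg
  simp only [coeff_sum_C_mul_map] at hcoeff
  exact Fintype.linearIndependent_iffₛ.mp hu (fun j ↦ coeff m (f j)) (fun j ↦ coeff m (g j))
    hcoeff i

noncomputable def basisCoord (u : Module.Basis ι k K) (G : MvPolynomial σ K) (i : ι) :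
    MvPolynomial σ k :=
  .ofCoeff <| Finsupp.mapRange (u.coord i) (map_zero _) <| AddMonoidAlgebra.coeff G

@[simp]
theorem coeff_basisCoord (u : Module.Basis ι k K) (G : MvPolynomial σ K) (i : ι)
    (m : σ →₀ ℕ) : coeff m (basisCoord u G i) = u.repr (coeff m G) i :=
  rfl

theorem sum_C_mul_map_basisCoord [Fintype ι] (u : Module.Basis ι k K) (G : MvPolynomial σ K) :
    ∑ i, C (u i) * map (algebraMap k K) (basisCoord u G i) = G := by
  ext m
  rw [coeff_sum_C_mul_map]
  simp only [coeff_basisCoord]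
  exact u.sum_repr _

theorem existsUnique_eq_sum_C_mul_map [Fintype ι] (u : Module.Basis ι k K)
    (G : MvPolynomial σ K) :
    ∃! f : ι → MvPolynomial σ k, G = ∑ i, C (u i) * map (algebraMap k K) (f i) :=
  ⟨basisCoord u G, (sum_C_mul_map_basisCoord u G).symm,
    fun _ hf ↦ sum_C_mul_map_injective u.linearIndependent <|
      hf.symm.trans (sum_C_mul_map_basisCoord u G).symm⟩

end MvPolynomial

/-- Existence and uniqueness of the Weil descent of a polynomial
`F ∈ K[x_1,…,x_n]` with respect to a basis `u` of `K` over `k`. -/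
theorem stmt_0 {k K : Type*} [Field k] [Field K] [Algebra k K]
    (n d : ℕ) (u : Module.Basis (Fin d) k K) (F : MvPolynomial (Fin n) K) :
    ∃! f : Fin d → MvPolynomial (Fin n × Fin d) k,
      aeval (fun t : Fin n => ∑ j : Fin d, C (u j) * X (t, j)) F
        = ∑ i : Fin d, C (u i) * MvPolynomial.map (algebraMap k K) (f i) :=
  existsUnique_eq_sum_C_mul_map u _
end

section
/- Let k be a finite field with q elements, K = F_{q^d} the extension of k of degree d with basis u_1,…,u_d over k, and k̄ an algebraic closure of k containing K. Let σ: k̄ → k̄ be the q-power Frobenius x ↦ x^q. Let F ∈ K[x_1,…,x_n] with descent (f_1,…,f_d), and for 0 ≤ j ≤ d−1 let F^{σ^j} be the polynomial obtained from F by applying σ^j to every coefficient. Then for every j ∈ {0,…,d−1} and every point β = (β_1,…,β_n) ∈ (k̄^d)^n: F^{σ^j}(δ^{σ^j}(β_1),…,δ^{σ^j}(β_n)) = Σ_{i=1}^d f_i(β)·σ^j(u_i), where δ^{σ^j}(x_1,…,x_d) = Σ_{i=1}^d x_i σ^j(u_i). In particular (j = 0), F(δ(β_1),…,δ(β_n))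 = Σ_i f_i(β)u_i for all β, i.e. F∘δ = δ∘F̂ as functions on k̄^{nd}. -/
open MvPolynomial

/-!
Evaluating the descent identity `F(Σ_j u_j y_{tj}) = Σ_i f_i(y) u_i` under any `k`-algebra map
`φ : K → L` and any point `β` gives `F^φ(Σ_j β_{tj} φ(u_j)) = Σ_i f_i(β) φ(u_i)`, because the `f_i`
have coefficients in `k`. The theorem is the case `φ = σ^j ∘ (K ↪ k̄)`, which is a `k`-algebra map
since the `q`-power Frobenius fixes `k`.
-/

theorem RingAut.pow_apply_algebraMap_of_frobenius {k L : Type*} [Field k] [Fintype k]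
    [CommRing L] [Algebra k L] (σ : RingAut L) (hσ : ∀ x : L, σ x = x ^ Fintype.card k)
    (m : ℕ) (c : k) : (σ ^ m) (algebraMap k L c) = algebraMap k L c := by
  have hfix : σ (algebraMap k L c) = algebraMap k L c := by
    rw [hσ, ← map_pow, FiniteField.pow_card]
  induction m with
  | zero => rfl
  | succ m ih =>
    rw [pow_succ]
    exact (congrArg (σ ^ m) hfix).trans ih

theorem MvPolynomial.eval₂_descent {k K L ι τ : Type*} [Fintype τ] [CommRing k] [CommRing K]
    [CommRing L] [Algebra k K] [Algebra k L] (φ : K →ₐ[k] L) (u : τ → K)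
    (F : MvPolynomial ι K) (f : τ → MvPolynomial (ι × τ) k)
    (hf : aeval (fun t => ∑ j, C (u j) * X (t, j)) F = ∑ i, C (u i) * map (algebraMap k K) (f i))
    (β : ι × τ → L) :
    eval₂ φ (fun t => ∑ i, β (t, i) * φ (u i)) F
      = ∑ i, eval₂ (algebraMap k L) β (f i) * φ (u i) := by
  have key := congrArg (eval₂Hom (φ : K →+* L) β) hf
  simp only [aeval_eq_bind₁, hom_bind₁, map_sum, map_mul, eval₂Hom_C, eval₂Hom_X',
    coe_eval₂Hom, eval₂_map, eval₂Hom_comp_C, φ.comp_algebraMap] at key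
  simp only [mul_comm (β _), mul_comm (eval₂ _ β _)]
  exact key

theorem stmt_2_general {k K kbar : Type*} [Field k] [Fintype k] [Field K] [Field kbar]
    [Algebra k K] [Algebra K kbar] [Algebra k kbar] [IsScalarTower k K kbar]
    (σ : RingAut kbar) (hσ : ∀ x : kbar, σ x = x ^ Fintype.card k)
    (n d : ℕ) (u : Module.Basis (Fin d) k K) (F : MvPolynomial (Fin n) K)
    (f : Fin d → MvPolynomial (Fin n × Fin d) k)
    (hf : aeval (fun t : Fin n => ∑ j : Fin d, C (u j) * X (t, j)) F
        = ∑ i : Fin d, C (u i) * MvPolynomial.map (algebraMap k K) (f i)) :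
    ∀ j : Fin d, ∀ β : Fin n × Fin d → kbar,
      eval₂ ((σ ^ (j : ℕ)).toRingHom.comp (algebraMap K kbar))
        (fun t : Fin n => ∑ i : Fin d, β (t, i) * (σ ^ (j : ℕ)) (algebraMap K kbar (u i))) F
      = ∑ i : Fin d,
          eval₂ (algebraMap k kbar) β (f i) * (σ ^ (j : ℕ)) (algebraMap K kbar (u i)) := by
  intro j β
  let φ : K →ₐ[k] kbar :=
    { (σ ^ (j : ℕ)).toRingHom.comp (algebraMap K kbar) with
      commutes' := fun c => by
        show (σ ^ (j : ℕ)) (algebraMap K kbar (algebraMap k K c)) = algebraMap k kbar c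
        rw [← IsScalarTower.algebraMap_apply]
        exact σ.pow_apply_algebraMap_of_frobenius hσ j c }
  exact eval₂_descent φ u F f hf β

/-- Twisted compatibility of the descent with the Frobenius:
for every `j` and every point `β ∈ (k̄^d)^n`,
`F^{σ^j}(δ^{σ^j}(β_1),…,δ^{σ^j}(β_n)) = Σ_i f_i(β)·σ^j(u_i)`. -/
theorem stmt_2 {k K kbar : Type*} [Field k] [Fintype k] [Field K] [Field kbar]
    [Algebra k K] [Algebra K kbar] [Algebra k kbar] [IsScalarTower k K kbar]
    [IsAlgClosure k kbar]
    (σ : RingAut kbar) (hσ : ∀ x : kbar, σ x = x ^ Fintype.card k)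
    (n d : ℕ) (u : Module.Basis (Fin d) k K) (F : MvPolynomial (Fin n) K)
    (f : Fin d → MvPolynomial (Fin n × Fin d) k)
    (hf : aeval (fun t : Fin n => ∑ j : Fin d, C (u j) * X (t, j)) F
        = ∑ i : Fin d, C (u i) * MvPolynomial.map (algebraMap k K) (f i)) :
    ∀ j : Fin d, ∀ β : Fin n × Fin d → kbar,
      eval₂ ((σ ^ (j : ℕ)).toRingHom.comp (algebraMap K kbar))
        (fun t : Fin n => ∑ i : Fin d, β (t, i) * (σ ^ (j : ℕ)) (algebraMap K kbar (u i))) F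
      = ∑ i : Fin d,
          eval₂ (algebraMap k kbar) β (f i) * (σ ^ (j : ℕ)) (algebraMap K kbar (u i)) :=
  stmt_2_general σ hσ n d u F f hf
end

section
/- Let k be a finite field with q elements, K = F_{q^d} ⊆ k̄ the degree-d extension of k in an algebraic closure k̄, u_1,…,u_d a basis of K over k, and σ the q-power Frobenius of k̄. Let F_1,…,F_m ∈ K[x_1,…,x_n], let V^{σ^j}(k̄) = {γ ∈ k̄^n : F_t^{σ^j}(γ) = 0 for all t} where F_t^{σ^j} applies σ^j to the coefficients of F_t, and let V̂(k̄) = {β ∈ (k̄^d)^n : f_{ti}(β) = 0 for all t, i}, where (f_{t1},…,f_{td}) is the descent of F_t. Then the map β = (β_1,…,β_n) ↦ ((δ^{σ^j}(β_1),…,δ^{σ^j}(β_n)))_{j=0}^{d-1}, with δ^{σ^j}(x_1,…,x_d) = Σ_i x_i σ^j(u_i), restricts to a bijection from V̂(k̄) onto the product ∏_{j=0}^{d-1} V^{σ^j}(k̄). -/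
/-!
For `0 ≤ j < d` the maps `τ_j = σ^j ∘ (K → k̄)` are the `d` distinct `k`-embeddings
`x ↦ x ^ q ^ j` of `K`, so by Dedekind's independence of characters the Moore matrix
`(τ_j(u_i))_{j,i}` is invertible. Applying `τ_j` to the descent identity gives
`F_t^{σ^j}(δ^{σ^j}(β)) = ∑_i τ_j(u_i) f_{ti}(β)`. Hence `β ↦ (δ^{σ^j}(β))_j` is the bijection given
by the Moore matrix, and it matches the common zeros of the `f_{ti}` with those of the `F_t^{σ^j}`.
-/

open Matrix

theorem RingEquiv.pow_apply_eq_pow_pow {R : Type*} [Semiring R] (σ : RingAut R) {q : ℕ}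
    (hσ : ∀ x, σ x = x ^ q) (e : ℕ) (x : R) : (σ ^ e) x = x ^ q ^ e := by
  induction e generalizing x with
  | zero => simp
  | succ e ih => rw [pow_succ, RingAut.mul_apply, ih, hσ, ← pow_mul, ← pow_succ']

theorem Matrix.isUnit_of_injective_algHom {k K L ι : Type*} [CommRing k] [Ring K] [Algebra k K]
    [Field L] [Algebra k L] [Fintype ι] [DecidableEq ι] (u : Module.Basis ι k K)
    {τ : ι → K →ₐ[k] L} (hτ : Function.Injective τ) :
    IsUnit (of fun j i => τ j (u i)) := by
  rw [← linearIndependent_rows_iff_isUnit]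
  exact ((linearIndependent_toLinearMap k K L).comp τ hτ).map' _ (u.constr L).symm.ker

open MvPolynomial

theorem MvPolynomial.eval₂_eq_sum_of_descent {k K L ν ι : Type*} [CommSemiring k]
    [CommSemiring K] [CommSemiring L] [Algebra k K] [Algebra k L] [Fintype ι]
    (φ : K →ₐ[k] L) (u : ι → K) {F : MvPolynomial ν K} {f : ι → MvPolynomial (ν × ι) k}
    (hf : aeval (fun s => ∑ j, C (u j) * X (s, j)) F = ∑ i, C (u i) * map (algebraMap k K) (f i))
    (β : ν × ι → L) :
    eval₂ (φ : K →+* L) (fun s => ∑ i, β (s, i) * φ (u i)) F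
      = ∑ i, φ (u i) * eval₂ (algebraMap k L) β (f i) := by
  have := congrArg (eval₂Hom (φ : K →+* L) β) hf
  rw [aeval_eq_bind₁, eval₂Hom_bind₁] at this
  simpa [eval₂_map, mul_comm] using this

theorem FiniteField.injective_algHom_comp_frobeniusAlgHom_pow {k K L : Type*} [Field k]
    [Fintype k] [Field K] [Finite K] [Algebra k K] [Semiring L] [Algebra k L]
    {φ : K →ₐ[k] L} (hφ : Function.Injective φ) {d : ℕ} (hd : Module.finrank k K = d) :
    Function.Injective fun j : Fin d => φ.comp (frobeniusAlgHom k K ^ (j : ℕ)) := by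
  intro a b hab
  have hpow : frobeniusAlgHom k K ^ (a : ℕ) = frobeniusAlgHom k K ^ (b : ℕ) :=
    AlgHom.ext fun x => hφ (AlgHom.congr_fun hab x)
  have hord : orderOf (frobeniusAlgHom k K) = d := (orderOf_frobeniusAlgHom k K).trans hd
  exact Fin.ext (pow_injOn_Iio_orderOf (hord ▸ a.2) (hord ▸ b.2) hpow)

theorem Matrix.bijOn_sum_mul_of_isUnit {ν ι κ L : Type*} [Fintype ι] [DecidableEq ι]
    [CommRing L] {M : Matrix ι ι L} (hM : IsUnit M) (g : κ → ι → (ν × ι → L) → L)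
    (G : ι → κ → (ν → L) → L)
    (hG : ∀ β t j, G j t (fun s => ∑ i, β (s, i) * M j i) = ∑ i, M j i * g t i β) :
    Set.BijOn (fun β j s => ∑ i, β (s, i) * M j i) {β | ∀ t i, g t i β = 0}
      {γ | ∀ j t, G j t (γ j) = 0} := by
  have hinj : Function.Injective M.mulVec := mulVec_injective_of_isUnit hM
  have hsurj : Function.Surjective M.mulVec := mulVec_surjective_iff_isUnit.mpr hM
  have hmulVec (v : ι → L) (j : ι) : (M *ᵥ v) j = ∑ i, v i * M j i := by
    simp only [mulVec, dotProduct, mul_comm]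
  have hbij : Function.Bijective fun (β : ν × ι → L) j s => ∑ i, β (s, i) * M j i := by
    refine ⟨fun β β' h => funext fun ⟨s, i⟩ => ?_, fun γ => ?_⟩
    · refine congrFun (hinj (a₁ := fun i => β (s, i)) (a₂ := fun i => β' (s, i))
        (funext fun j => ?_)) i
      simpa only [hmulVec] using congrFun (congrFun h j) s
    · choose x hx using fun s => hsurj fun j => γ j s
      exact ⟨fun p => x p.1 p.2, funext fun j => funext fun s => by
        simpa only [hmulVec] using congrFun (hx s) j⟩
  convert hbij.bijOn_preimage using 1
  ext β
  simp only [Set.mem_ofPred_eq, Set.mem_preimage, hG]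
  refine Iff.trans ?_ forall_comm
  refine forall_congr' fun t => ?_
  simpa [funext_iff, mulVec, dotProduct] using
    (hinj.eq_iff' M.mulVec_zero (a := fun i => g t i β)).symm

theorem stmt_4_general {k K kbar : Type*} [Field k] [Fintype k] [Field K] [Field kbar]
    [Algebra k K] [Algebra K kbar] [Algebra k kbar] [IsScalarTower k K kbar]
    (σ : RingAut kbar) (hσ : ∀ x : kbar, σ x = x ^ Fintype.card k)
    (n d m : ℕ) (u : Module.Basis (Fin d) k K)
    (F : Fin m → MvPolynomial (Fin n) K)
    (f : Fin m → Fin d → MvPolynomial (Fin n × Fin d) k)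
    (hf : ∀ t : Fin m,
      aeval (fun s : Fin n => ∑ j : Fin d, C (u j) * X (s, j)) (F t)
        = ∑ i : Fin d, C (u i) * MvPolynomial.map (algebraMap k K) (f t i)) :
    Set.BijOn
      (fun (β : Fin n × Fin d → kbar) (j : Fin d) (t : Fin n) =>
        ∑ i : Fin d, β (t, i) * (σ ^ (j : ℕ)) (algebraMap K kbar (u i)))
      {β : Fin n × Fin d → kbar | ∀ t : Fin m, ∀ i : Fin d,
        eval₂ (algebraMap k kbar) β (f t i) = 0}
      {γ : Fin d → Fin n → kbar | ∀ j : Fin d, ∀ t : Fin m,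
        eval₂ ((σ ^ (j : ℕ)).toRingHom.comp (algebraMap K kbar)) (γ j) (F t) = 0} := by
  classical
  have : Module.Finite k K := .of_basis u
  have : Finite K := Module.finite_of_finite k
  set τ : Fin d → K →ₐ[k] kbar :=
    fun j => (IsScalarTower.toAlgHom k K kbar).comp (FiniteField.frobeniusAlgHom k K ^ (j : ℕ))
  have hτ_apply (j : Fin d) (x : K) : (σ ^ (j : ℕ)) (algebraMap K kbar x) = τ j x := by
    change _ = algebraMap K kbar ((FiniteField.frobeniusAlgHom k K ^ (j : ℕ)) x)
    rw [σ.pow_apply_eq_pow_pow hσ, AlgHom.coe_pow, FiniteField.coe_frobeniusAlgHom, pow_iterate,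
      map_pow]
  have hτ (j : Fin d) : (σ ^ (j : ℕ)).toRingHom.comp (algebraMap K kbar) = τ j :=
    RingHom.ext (hτ_apply j)
  have hM : IsUnit (Matrix.of fun j i => τ j (u i)) :=
    Matrix.isUnit_of_injective_algHom u <|
      FiniteField.injective_algHom_comp_frobeniusAlgHom_pow (algebraMap K kbar).injective <|
        (Module.finrank_eq_card_basis u).trans (Fintype.card_fin d)
  simp only [hτ, hτ_apply]
  exact Matrix.bijOn_sum_mul_of_isUnit hM (fun t i β => eval₂ (algebraMap k kbar) β (f t i))
    (fun j t γ => eval₂ (τ j : K →+* kbar) γ (F t)) fun β t j =>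
    eval₂_eq_sum_of_descent (τ j) u (hf t) β

/-- The map `β ↦ (δ^{σ^j}(β))_{j=0}^{d-1}` restricts to a bijection from
the descent variety `V̂(k̄)` onto the product `∏_{j=0}^{d-1} V^{σ^j}(k̄)`. -/
theorem stmt_4 {k K kbar : Type*} [Field k] [Fintype k] [Field K] [Field kbar]
    [Algebra k K] [Algebra K kbar] [Algebra k kbar] [IsScalarTower k K kbar]
    [IsAlgClosure k kbar]
    (σ : RingAut kbar) (hσ : ∀ x : kbar, σ x = x ^ Fintype.card k)
    (n d m : ℕ) (u : Module.Basis (Fin d) k K)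
    (F : Fin m → MvPolynomial (Fin n) K)
    (f : Fin m → Fin d → MvPolynomial (Fin n × Fin d) k)
    (hf : ∀ t : Fin m,
      aeval (fun s : Fin n => ∑ j : Fin d, C (u j) * X (s, j)) (F t)
        = ∑ i : Fin d, C (u i) * MvPolynomial.map (algebraMap k K) (f t i)) :
    Set.BijOn
      (fun (β : Fin n × Fin d → kbar) (j : Fin d) (t : Fin n) =>
        ∑ i : Fin d, β (t, i) * (σ ^ (j : ℕ)) (algebraMap K kbar (u i)))
      {β : Fin n × Fin d → kbar | ∀ t : Fin m, ∀ i : Fin d,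
        eval₂ (algebraMap k kbar) β (f t i) = 0}
      {γ : Fin d → Fin n → kbar | ∀ j : Fin d, ∀ t : Fin m,
        eval₂ ((σ ^ (j : ℕ)).toRingHom.comp (algebraMap K kbar)) (γ j) (F t) = 0} :=
  stmt_4_general σ hσ n d m u F f hf
end

section
/- Let k be a field, K a field extension of k of degree d with basis u_1,…,u_d, and F_1,…,F_m ∈ K[x_1,…,x_n] with descents (f_{t1},…,f_{td}) for t = 1,…,m. Let V(K) = {α ∈ K^n : F_t(α) = 0 for all t} and V̂(k) = {(a_{tj}) ∈ k^{nd} : f_{ti}((a_{tj})) = 0 for all t, i}. Then the map sending α = (α_1,…,α_n) ∈ V(K) to its coordinate matrix (a_{tj}) ∈ k^{nd}, where α_t = Σ_{j=1}^d a_{tj}u_j, is a bijection from V(K) onto V̂(k). -/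
/-!
Evaluating the descent identity at `x_s = Σ_j a_{sj} u_j` gives
`F(α) = Σ_i f_i(a) u_i`, so the `k`-coordinates of `F(α)` in the basis `u` are the values of the
descents at the coordinate matrix of `α`. Hence `F_t(α) = 0` for all `t` exactly when all
`f_{ti}` vanish there, and the coordinate map, being a bijection `K^n ≃ k^{nd}`, restricts to a
bijection between the two zero sets.
-/

open MvPolynomial

section Descent

variable {k K σ ι : Type*} [CommSemiring k] [CommSemiring K] [Algebra k K] [Fintype ι]

theorem eval_eq_sum_smul_of_descent (u : ι → K) {P : MvPolynomial σ K}
    {g : ι → MvPolynomial (σ × ι) k}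
    (h : aeval (fun s => ∑ j, C (u j) * X (s, j)) P = ∑ i, C (u i) * map (algebraMap k K) (g i))
    (a : σ × ι → k) :
    eval (fun s => ∑ j, a (s, j) • u j) P = ∑ i, eval a (g i) • u i := by
  have eval_map_comp (q : MvPolynomial (σ × ι) k) :
      eval₂ (algebraMap k K) (fun p => algebraMap k K (a p)) q = algebraMap k K (eval a q) := by
    rw [← eval₂_id, eval₂_comp_left, RingHom.comp_id]; rfl
  have h' := congrArg (eval (algebraMap k K ∘ a)) h
  rw [aeval_def, MvPolynomial.algebraMap_eq, ← eval_assoc] at h'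
  simpa [Function.comp_def, eval_map_comp, Algebra.smul_def, mul_comm] using h'

namespace Module.Basis

theorem repr_eval_of_descent (u : Basis ι k K) {P : MvPolynomial σ K}
    {g : ι → MvPolynomial (σ × ι) k}
    (h : aeval (fun s => ∑ j, C (u j) * X (s, j)) P = ∑ i, C (u i) * map (algebraMap k K) (g i))
    (α : σ → K) (i : ι) :
    u.repr (eval α P) i = eval (fun p => u.repr (α p.1) p.2) (g i) := by
  have hα : α = fun s => ∑ j, u.repr (α s) j • u j := funext fun s => (u.sum_repr (α s)).symm
  conv_lhs =>
    rw [hα, eval_eq_sum_smul_of_descent u h (fun p => u.repr (α p.1) p.2), u.repr_sum_self]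

noncomputable def piCoordEquiv (u : Basis ι k K) : (σ → K) ≃ (σ × ι → k) where
  toFun α p := u.repr (α p.1) p.2
  invFun a s := ∑ j, a (s, j) • u j
  left_inv α := funext fun s => u.sum_repr (α s)
  right_inv a := funext fun p => congrFun (u.repr_sum_self fun j => a (p.1, j)) p.2

end Module.Basis

end Descent

/-- The coordinate map `α ↦ (a_{tj})` is a bijection from `V(K)`
onto the descent variety `V̂(k)`. -/
theorem stmt_5 {k K : Type*} [Field k] [Field K] [Algebra k K]
    (n d m : ℕ) (u : Module.Basis (Fin d) k K)
    (F : Fin m → MvPolynomial (Fin n) K)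
    (f : Fin m → Fin d → MvPolynomial (Fin n × Fin d) k)
    (hf : ∀ t : Fin m,
      aeval (fun s : Fin n => ∑ j : Fin d, C (u j) * X (s, j)) (F t)
        = ∑ i : Fin d, C (u i) * MvPolynomial.map (algebraMap k K) (f t i)) :
    Set.BijOn
      (fun (α : Fin n → K) (p : Fin n × Fin d) => u.repr (α p.1) p.2)
      {α : Fin n → K | ∀ t : Fin m, eval α (F t) = 0}
      {a : Fin n × Fin d → k | ∀ t : Fin m, ∀ i : Fin d, eval a (f t i) = 0} := by
  refine (u.piCoordEquiv (σ := Fin n)).bijOn fun α => forall_congr' fun t => ?_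
  rw [← u.forall_coord_eq_zero_iff]
  exact forall_congr' fun i => by rw [Module.Basis.coord_apply, u.repr_eval_of_descent (hf t)]; rfl
end

section
/- Let k be a finite field with q elements, K = F_{q^d} ⊆ k̄ the degree-d extension of k in an algebraic closure k̄, and u_1,…,u_d a basis of K over k. Let T = a·m be a nonconstant term in K[x_1,…,x_n], i.e. a ∈ K, a ≠ 0, and m a monomial of positive degree, and let T̂ = (f_1,…,f_d) be its descent with respect to u_1,…,u_d. Then the evaluation map k̄^{nd} → k̄^d, β ↦ (f_1(β),…,f_d(β)), is surjective. -/
/-!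
Let `σ_1, …, σ_d` be the `k`-embeddings of `K` into `k̄`. Applying `σ_r` to the defining identity
of the descent gives `∑ᵢ fᵢ(β) σ_r(uᵢ) = σ_r(a) ∏ₜ ℓ_{r,c(t)}(β)` with linear forms
`ℓ_{r,s}(β) = ∑ⱼ β_{s,j} σ_r(u_j)`. Since `K/k` is separable, the matrix `(σ_r(uᵢ))` is invertible
(its squared determinant is the discriminant of the basis), so it suffices to hit any prescribed
values `σ_r(a) λ_r^D` on the right; taking `β_{s,j} = y_j` for all `s`, with `y` solving the linear
system `ℓ_{r,s} = λ_r`, makes every factor of the product equal to `λ_r`.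
-/

open MvPolynomial Matrix

theorem Algebra.isUnit_embeddingsMatrixReindex {K L E ι : Type*} [Field K] [Field L] [Field E]
    [Algebra K L] [Algebra K E] [IsAlgClosed E] [Algebra.IsSeparable K L] [FiniteDimensional K L]
    [Fintype ι] [DecidableEq ι]
    (b : Module.Basis ι K L) (e : ι ≃ (L →ₐ[K] E)) :
    IsUnit (Algebra.embeddingsMatrixReindex K E b e) := by
  rw [isUnit_iff_isUnit_det, isUnit_iff_ne_zero, ← pow_ne_zero_iff two_ne_zero,
    ← Algebra.discr_eq_det_embeddingsMatrixReindex_pow_two, map_ne_zero]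
  exact Algebra.discr_not_zero_of_basis K b

theorem Algebra.vecMul_embeddingsMatrixReindex_apply {A B C ι : Type*} [CommRing A] [CommRing B]
    [CommRing C] [Algebra A B] [Algebra A C] [Fintype ι] (b : ι → B)
    (e : ι ≃ (B →ₐ[A] C)) (x : ι → C) (r : ι) :
    (x ᵥ* Algebra.embeddingsMatrixReindex A C b e) r = ∑ i, x i * e r (b i) := by
  simp [vecMul, dotProduct, Algebra.embeddingsMatrixReindex]

theorem sum_eval₂_mul_eq_eval₂_of_descent {k K L σ ι : Type*} [CommRing k] [CommRing K]
    [CommRing L] [Algebra k K] [Algebra k L] [Fintype ι] (u : ι → K) (F : MvPolynomial σ K)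
    (f : ι → MvPolynomial (σ × ι) k)
    (hf : aeval (fun t => ∑ j, C (u j) * X (t, j)) F =
      ∑ i, C (u i) * map (algebraMap k K) (f i))
    (τ : K →ₐ[k] L) (β : σ × ι → L) :
    ∑ i, eval₂ (algebraMap k L) β (f i) * τ (u i) =
      eval₂ τ (fun t => ∑ j, β (t, j) * τ (u j)) F := by
  calc ∑ i, eval₂ (algebraMap k L) β (f i) * τ (u i)
      = eval₂Hom (τ : K →+* L) β (∑ i, C (u i) * map (algebraMap k K) (f i)) := by
        simp [eval₂_map, mul_comm]
    _ = eval₂Hom (τ : K →+* L) β (aeval (fun t => ∑ j, C (u j) * X (t, j)) F) := by rw [hf]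
    _ = eval₂ τ (fun t => ∑ j, β (t, j) * τ (u j)) F := by
        simp [aeval_eq_bind₁, eval₂Hom_bind₁, mul_comm]

theorem stmt_9_general {k K kbar : Type*} [Field k] [Fintype k] [Field K] [Field kbar]
    [Algebra k K] [Algebra k kbar]
    [IsAlgClosure k kbar]
    (n d D : ℕ) (hD : 1 ≤ D) (u : Module.Basis (Fin d) k K)
    (a : K) (ha : a ≠ 0) (c : Fin D → Fin n)
    (f : Fin d → MvPolynomial (Fin n × Fin d) k)
    (hf : aeval (fun t : Fin n => ∑ j : Fin d, C (u j) * X (t, j))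
            (C a * ∏ t : Fin D, (X (c t) : MvPolynomial (Fin n) K))
        = ∑ i : Fin d, C (u i) * MvPolynomial.map (algebraMap k K) (f i)) :
    Function.Surjective
      (fun (β : Fin n × Fin d → kbar) (i : Fin d) => eval₂ (algebraMap k kbar) β (f i)) := by
  have : FiniteDimensional k K := Module.Finite.of_basis u
  have : IsAlgClosed kbar := IsAlgClosure.isAlgClosed k
  let e : Fin d ≃ (K →ₐ[k] kbar) :=
    (Fintype.equivFinOfCardEq (by rw [AlgHom.card, Module.finrank_eq_card_basis u,
      Fintype.card_fin])).symm
  set M := Algebra.embeddingsMatrixReindex k kbar u e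
  have hM : IsUnit M := Algebra.isUnit_embeddingsMatrixReindex u e
  have hdescent : ∀ β r, ((fun i => eval₂ (algebraMap k kbar) β (f i)) ᵥ* M) r =
      e r a * ∏ t, ∑ j, β (c t, j) * e r (u j) := by
    intro β r
    rw [Algebra.vecMul_embeddingsMatrixReindex_apply,
      sum_eval₂_mul_eq_eval₂_of_descent u _ f hf]
    simp
  intro w
  obtain ⟨lam, hlam⟩ : ∃ lam : Fin d → kbar, ∀ r, e r a * lam r ^ D = (w ᵥ* M) r := by
    choose lam hlam using fun r => IsAlgClosed.exists_pow_nat_eq ((w ᵥ* M) r / e r a) hD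
    exact ⟨lam, fun r => by rw [hlam, mul_div_cancel₀ _ ((map_ne_zero _).2 ha)]⟩
  obtain ⟨y, hy⟩ : ∃ y, y ᵥ* M = lam := vecMul_surjective_iff_isUnit.2 hM lam
  refine ⟨fun p => y p.2, vecMul_injective_iff_isUnit.2 hM (funext fun r => ?_)⟩
  change ((fun i => eval₂ (algebraMap k kbar) (fun p => y p.2) (f i)) ᵥ* M) r = (w ᵥ* M) r
  rw [hdescent, ← hlam, ← hy, Algebra.vecMul_embeddingsMatrixReindex_apply]
  simp

/-- The evaluation map `k̄^{nd} → k̄^d` of the descent of a nonconstant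
term `T = a·m` (with `a ≠ 0` and `m = ∏_{t=1}^D x_{c(t)}`, `D ≥ 1`) is surjective. -/
theorem stmt_9 {k K kbar : Type*} [Field k] [Fintype k] [Field K] [Field kbar]
    [Algebra k K] [Algebra K kbar] [Algebra k kbar] [IsScalarTower k K kbar]
    [IsAlgClosure k kbar]
    (n d D : ℕ) (hD : 1 ≤ D) (u : Module.Basis (Fin d) k K)
    (a : K) (ha : a ≠ 0) (c : Fin D → Fin n)
    (f : Fin d → MvPolynomial (Fin n × Fin d) k)
    (hf : aeval (fun t : Fin n => ∑ j : Fin d, C (u j) * X (t, j))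
            (C a * ∏ t : Fin D, (X (c t) : MvPolynomial (Fin n) K))
        = ∑ i : Fin d, C (u i) * MvPolynomial.map (algebraMap k K) (f i)) :
    Function.Surjective
      (fun (β : Fin n × Fin d → kbar) (i : Fin d) => eval₂ (algebraMap k kbar) β (f i)) :=
  stmt_9_general n d D hD u a ha c f hf
end

section
/- Let k be a finite field with q elements, K = F_{q^d} the degree-d extension of k with basis u_1,…,u_d over k. Let T = a·m be a nonconstant term in K[x_1,…,x_n] (a ∈ K, a ≠ 0, m a monomial of positive degree) with descent T̂ = (f_1,…,f_d), and let Γ ∈ GL_d(k). If Γ·T̂ = T̂, i.e. Σ_{i=1}^d Γ_{ji} f_i = f_j for all j, then Γ is the identity matrix. -/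
/-!
Specialize each variable `y_{t,j}` to the `j`-th coordinate of `X + τ` in `k[X]`. Then
`∑ j, y_{t,j} u_j` becomes `X + τ`, so `T` becomes `a (X + τ)^D`, and the coordinate vector
of each coefficient of `a (X + τ)^D` is a `k`-linear image of the descent, hence fixed by `Γ`.
Writing `D = p^m (e + 1)` with `p ∤ e + 1`, Frobenius gives
`(X + τ)^D = (X^{p^m} + τ^{p^m})^{e+1}`, whose coefficient of `X^{p^m e}` is `(e + 1) τ^{p^m}`.
As Frobenius is bijective on the finite field `K`, these coefficients exhaust `K`, so `Γ` fixes
every vector of `k^d`.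
-/

open MvPolynomial
open scoped Matrix

theorem Polynomial.coeff_X_add_C_pow_expChar_pow_mul {R : Type*} [CommRing R] (p : ℕ)
    [ExpChar R p] (m e : ℕ) (τ : R) :
    ((Polynomial.X + Polynomial.C τ) ^ (p ^ m * (e + 1))).coeff (p ^ m * e)
      = (e + 1) * τ ^ p ^ m := by
  have hexpand : (Polynomial.X + Polynomial.C τ) ^ (p ^ m * (e + 1))
      = Polynomial.expand R (p ^ m) ((Polynomial.X + Polynomial.C (τ ^ p ^ m)) ^ (e + 1)) := by
    rw [pow_mul, add_pow_expChar_pow, map_pow, map_add, Polynomial.expand_X,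
      Polynomial.expand_C, Polynomial.C_pow]
  rw [hexpand, Polynomial.coeff_expand_mul' (expChar_pow_pos R p m),
    Polynomial.coeff_X_add_C_pow, Nat.add_sub_cancel_left, pow_one, Nat.choose_succ_self_right]
  push_cast
  ring

theorem exists_coeff_X_add_C_pow_eq {K : Type*} [Field K] (p : ℕ) [Fact p.Prime] [CharP K p]
    [PerfectRing K p] {D : ℕ} (hD : D ≠ 0) (z : K) :
    ∃ τ r, ((Polynomial.X + Polynomial.C τ) ^ D).coeff r = z := by
  obtain ⟨m, e, hpe, rfl⟩ := Nat.exists_eq_pow_mul_and_not_dvd hD p (Fact.out : p.Prime).ne_one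
  obtain ⟨e, rfl⟩ :=
    Nat.exists_eq_succ_of_ne_zero (show e ≠ 0 by rintro rfl; exact hpe (dvd_zero p))
  have he : (e + 1 : K) ≠ 0 := by exact_mod_cast (CharP.cast_eq_zero_iff K p _).not.mpr hpe
  refine ⟨(iterateFrobeniusEquiv K p m).symm (z / (e + 1)), p ^ m * e, ?_⟩
  rw [Polynomial.coeff_X_add_C_pow_expChar_pow_mul, ← iterateFrobenius_def,
    ← iterateFrobeniusEquiv_apply, RingEquiv.apply_symm_apply, mul_div_cancel₀ _ he]

section Descent

variable {k K ι : Type*} [CommRing k] [CommRing K] [Algebra k K]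

noncomputable def Module.Basis.coordLine (u : Module.Basis ι k K) (τ : K) {σ : Type*} :
    σ × ι → Polynomial k :=
  fun v => Polynomial.C (u.repr τ v.2) + Polynomial.C (u.repr 1 v.2) * Polynomial.X

variable [Fintype ι]

theorem Module.Basis.equivFun_coeff_of_sum_C_mul_map (u : Module.Basis ι k K)
    {P : ι → Polynomial k} {Q : Polynomial K}
    (hQ : ∑ i, Polynomial.C (u i) * (P i).map (algebraMap k K) = Q) (r : ℕ) :
    u.equivFun (Q.coeff r) = fun i => (P i).coeff r := by
  rw [← hQ, ← u.equivFun.apply_symm_apply fun i => (P i).coeff r, u.equivFun_symm_apply,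
    Polynomial.finsetSum_coeff]
  refine congrArg _ (Finset.sum_congr rfl fun i _ => ?_)
  rw [Polynomial.coeff_C_mul, Polynomial.coeff_map, Algebra.smul_def, mul_comm]

theorem Module.Basis.sum_C_mul_map_coordLine (u : Module.Basis ι k K) (τ : K) {σ : Type*}
    (t : σ) :
    ∑ j, Polynomial.C (u j) * (u.coordLine τ (t, j)).map (algebraMap k K)
      = Polynomial.X + Polynomial.C τ := by
  have hsum : ∀ z : K, ∑ j, u j * algebraMap k K (u.repr z j) = z := fun z => by
    conv_rhs => rw [← u.sum_repr z]
    simp only [Algebra.smul_def, mul_comm]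
  simp only [Module.Basis.coordLine, Polynomial.map_add, Polynomial.map_mul, Polynomial.map_C,
    Polynomial.map_X, mul_add, ← mul_assoc, ← Polynomial.C_mul, Finset.sum_add_distrib,
    ← Finset.sum_mul, ← map_sum, hsum, Polynomial.C_1, one_mul, add_comm]

theorem Module.Basis.sum_C_mul_map_aeval_coordLine (u : Module.Basis ι k K) {σ : Type*}
    {F : MvPolynomial σ K} {f : ι → MvPolynomial (σ × ι) k}
    (hf : aeval (fun t => ∑ j, C (u j) * X (t, j)) F
      = ∑ i, C (u i) * map (algebraMap k K) (f i))
    (τ : K) :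
    ∑ i, Polynomial.C (u i) * (aeval (u.coordLine τ) (f i)).map (algebraMap k K)
      = aeval (fun _ => Polynomial.X + Polynomial.C τ) F := by
  have := congrArg (aeval fun v => (u.coordLine τ v).map (algebraMap k K)) hf
  rw [comp_aeval_apply, map_sum] at this
  simp only [map_mul, aeval_C, map_sum, aeval_X, aeval_map_algebraMap, Polynomial.algebraMap_eq,
    u.sum_C_mul_map_coordLine] at this
  rw [this]
  refine Finset.sum_congr rfl fun i _ => ?_
  rw [← Polynomial.mapAlg_eq_map, comp_aeval_apply]
  simp only [Polynomial.mapAlg_eq_map]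

end Descent

theorem MvPolynomial.mulVec_comp_eq_of_sum_C_mul_eq {σ ι R : Type*} [CommSemiring R] [Fintype ι]
    {Γ : Matrix ι ι R} {f : ι → MvPolynomial σ R} (h : ∀ j, ∑ i, C (Γ j i) * f i = f j)
    (L : MvPolynomial σ R →ₗ[R] R) :
    Γ *ᵥ (L ∘ f) = L ∘ f := by
  ext j
  simp only [Matrix.mulVec, dotProduct, Function.comp_apply]
  rw [← h j, map_sum]
  simp only [C_mul', map_smul, smul_eq_mul]

theorem stmt_10_general {k K : Type*} [Field k] [Fintype k] [Field K] [Algebra k K]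
    (n d D : ℕ) (hD : 1 ≤ D) (u : Module.Basis (Fin d) k K)
    (a : K) (ha : a ≠ 0) (c : Fin D → Fin n)
    (f : Fin d → MvPolynomial (Fin n × Fin d) k)
    (hf : aeval (fun t : Fin n => ∑ j : Fin d, C (u j) * X (t, j))
            (C a * ∏ t : Fin D, (X (c t) : MvPolynomial (Fin n) K))
        = ∑ i : Fin d, C (u i) * MvPolynomial.map (algebraMap k K) (f i))
    (Γ : Matrix (Fin d) (Fin d) k)
    (h : ∀ j : Fin d, ∑ i : Fin d, C (Γ j i) * f i = f j) :
    Γ = 1 := by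
  have := Module.Finite.of_basis u
  have : Finite K := Module.finite_of_finite k
  have : CharP K (ringChar k) := charP_of_injective_algebraMap (algebraMap k K).injective _
  have : Fact (ringChar k).Prime := ⟨CharP.char_is_prime k _⟩
  have hfix : ∀ z : K, Γ *ᵥ u.equivFun z = u.equivFun z := by
    intro z
    obtain ⟨τ, r, hτ⟩ := exists_coeff_X_add_C_pow_eq (ringChar k) (by omega : D ≠ 0) (z / a)
    have hz : (aeval (fun _ => Polynomial.X + Polynomial.C τ)
        (C a * ∏ t : Fin D, (X (c t) : MvPolynomial (Fin n) K))).coeff r = z := by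
      simp only [map_mul, aeval_C, map_prod, aeval_X, Finset.prod_const, Finset.card_univ,
        Fintype.card_fin, Polynomial.algebraMap_eq, Polynomial.coeff_C_mul, hτ,
        mul_div_cancel₀ _ ha]
    rw [← hz, u.equivFun_coeff_of_sum_C_mul_map (u.sum_C_mul_map_aeval_coordLine hf τ) r]
    exact mulVec_comp_eq_of_sum_C_mul_eq h
      ((Polynomial.lcoeff k r).comp (aeval (u.coordLine τ)).toLinearMap)
  rw [Matrix.ext_iff_mulVec]
  intro v
  rw [Matrix.one_mulVec, ← u.equivFun.apply_symm_apply v]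
  exact hfix _

/-- If `Γ ∈ GL_d(k)` fixes the descent of a nonconstant term
`T = a·m` (i.e. `Σ_i Γ_{ji} f_i = f_j` for all `j`), then `Γ` is the identity matrix. -/
theorem stmt_10 {k K : Type*} [Field k] [Fintype k] [Field K] [Algebra k K]
    (n d D : ℕ) (hD : 1 ≤ D) (u : Module.Basis (Fin d) k K)
    (a : K) (ha : a ≠ 0) (c : Fin D → Fin n)
    (f : Fin d → MvPolynomial (Fin n × Fin d) k)
    (hf : aeval (fun t : Fin n => ∑ j : Fin d, C (u j) * X (t, j))
            (C a * ∏ t : Fin D, (X (c t) : MvPolynomial (Fin n) K))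
        = ∑ i : Fin d, C (u i) * MvPolynomial.map (algebraMap k K) (f i))
    (Γ : Matrix (Fin d) (Fin d) k) (hΓ : IsUnit Γ)
    (h : ∀ j : Fin d, ∑ i : Fin d, C (Γ j i) * f i = f j) :
    Γ = 1 :=
  stmt_10_general n d D hD u a ha c f hf Γ h
end

section
/- Let k be a finite field with q elements, K = F_{q^d} the degree-d extension of k with basis u_1,…,u_d over k. Let T = c·m be a nonconstant term in K[x_1,…,x_n] (c ∈ K, c ≠ 0, m a monomial of positive degree), let a ∈ K with a ≠ 0, and let Γ ∈ GL_d(k). Then Γ·T̂ equals the descent of a·T if and only if Γ = Γ_a^t, where Γ_a ∈ Mat_d(k) is the matrix of multiplication by a in the basis u_1,…,u_d. -/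
/-!
If `T̂ = (f_i)`, i.e. `T(Σ_j y_{tj} u_j) = Σ_i f_i u_i`, then multiplying by `a` and expanding
`a u_i = Σ_j (Γ_a)_{ij} u_j` shows `(aT)^ = Γ_aᵗ · T̂`. So the theorem amounts to the `k`-linear
independence of `f_1, …, f_d`, which holds as soon as the coefficients of `T(Σ_j y_{tj} u_j)` span
`K` over `k`: a relation `Σ b_i f_i = 0` gives the linear form `Σ b_i u_i^*` on `K`, which kills
all these coefficients.

For the spanning, write each `α X + β ∈ K[X]` as `Σ_j u_j (α_j X + β_j)` with `α_j, β_j ∈ k`;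
then the coefficients of the restriction of `T` to any affine line in `K[X]` lie in that span.
On the line `x_{s₀} = X + z`, `x_s = 1` (`s ≠ s₀`) the term becomes `c (X + z)^e`. Writing
`e = q^v r` with `q` the exponential characteristic and `r ≠ 0` in `K`, Frobenius gives
`(X + z)^e = (X^{q^v} + z^{q^v})^r`, whose `X^{q^v (r-1)}`-coefficient is `r z^{q^v}`; and
`z ↦ z^{q^v}` is onto since `K` is perfect.
-/

open MvPolynomial

lemma exists_eq_pow_mul_natCast_ne_zero (R : Type*) [Field R] (q : ℕ) [hq : ExpChar R q]
    {e : ℕ} (he : e ≠ 0) : ∃ v m : ℕ, e = q ^ v * m ∧ (m : R) ≠ 0 := by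
  cases hq with
  | zero => exact ⟨0, e, by simp, Nat.cast_ne_zero.2 he⟩
  | prime hq =>
    obtain ⟨v, m, hm, rfl⟩ := Nat.exists_eq_pow_mul_and_not_dvd he q hq.ne_one
    exact ⟨v, m, rfl, fun h => hm ((CharP.cast_eq_zero_iff R q m).1 h)⟩

namespace Polynomial

lemma coeff_X_add_C_pow_expChar_pow_mul_s11 {R : Type*} [CommRing R] (q : ℕ) [ExpChar R q]
    (z : R) (v : ℕ) {m : ℕ} (hm : 0 < m) :
    ((X + C z) ^ (q ^ v * m)).coeff (q ^ v * (m - 1)) = m * z ^ q ^ v := by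
  have hfrob : (X + C z) ^ q ^ v = expand R (q ^ v) (X + C (z ^ q ^ v)) := by
    rw [add_pow_expChar_pow, ← C_pow, map_add, expand_X, expand_C]
  rw [pow_mul, hfrob, ← map_pow, coeff_expand_mul' (pow_pos (expChar_pos R q) v),
    coeff_X_add_C_pow, Nat.sub_sub_self hm, pow_one,
    Nat.choose_symm_of_eq_add (Nat.sub_add_cancel hm).symm, Nat.choose_one_right, mul_comm]

end Polynomial

namespace MvPolynomial

variable {k K : Type*} [Field k] [Field K] [Algebra k K] {σ ι : Type*} [Fintype ι]

noncomputable def genericPoint (u : ι → K) (t : σ) : MvPolynomial (σ × ι) K :=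
  ∑ j, C (u j) * X (t, j)

/-- `aeval (genericPoint u) F = fromDescent u f` says that `f` is the descent `F̂` of `F`. -/
noncomputable def fromDescent (u : ι → K) (f : ι → MvPolynomial σ k) : MvPolynomial σ K :=
  ∑ i, C (u i) * map (algebraMap k K) (f i)

lemma coeff_fromDescent (u : ι → K) (f : ι → MvPolynomial σ k) (μ : σ →₀ ℕ) :
    coeff μ (fromDescent u f) = ∑ i, coeff μ (f i) • u i := by
  simp only [fromDescent, coeff_sum, coeff_C_mul, coeff_map, Algebra.smul_def, mul_comm]

lemma fromDescent_injective (u : Module.Basis ι k K) :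
    Function.Injective (fromDescent (k := k) (σ := σ) u) := by
  intro f g hfg
  funext i
  ext μ
  have h := congrArg (coeff μ) hfg
  simp only [coeff_fromDescent, ← u.equivFun_symm_apply] at h
  exact congrFun (u.equivFun.symm.injective h) i

lemma C_mul_fromDescent {u : ι → K} {a : K} {Γ : Matrix ι ι k}
    (hΓ : ∀ i, a * u i = ∑ j, Γ i j • u j) (f : ι → MvPolynomial σ k) :
    C a * fromDescent u f = fromDescent u fun j => ∑ i, C (Γ i j) * f i := by
  ext μ
  simp only [coeff_C_mul, coeff_fromDescent, coeff_sum, Finset.mul_sum, mul_smul_comm, hΓ]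
  simp only [Finset.smul_sum, smul_smul, Finset.sum_smul]
  rw [Finset.sum_comm]
  simp only [mul_comm]

lemma eq_sum_C_mul_of_aeval_genericPoint_C_mul (u : Module.Basis ι k K) {a : K}
    {Γ : Matrix ι ι k} (hΓ : ∀ i, a * u i = ∑ j, Γ i j • u j) {P : MvPolynomial σ K}
    {f g : ι → MvPolynomial (σ × ι) k} (hf : aeval (genericPoint u) P = fromDescent u f)
    (hg : aeval (genericPoint u) (C a * P) = fromDescent u g) :
    g = fun j => ∑ i, C (Γ i j) * f i :=
  fromDescent_injective u <| by
    rw [← hg, ← C_mul_fromDescent hΓ, ← hf, map_mul, aeval_C, algebraMap_eq]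

lemma linearIndependent_of_eq_fromDescent (u : Module.Basis ι k K) {P : MvPolynomial σ K}
    {f : ι → MvPolynomial σ k} (hP : P = fromDescent u f)
    (hspan : Submodule.span k (Set.range fun μ => coeff μ P) = ⊤) :
    LinearIndependent k f := by
  rw [Fintype.linearIndependent_iff]
  intro b hb
  let φ : K →ₗ[k] k := ∑ i, b i • u.coord i
  have hφu : ∀ i, φ (u i) = b i := by
    intro i
    classical
    simp [φ, Finsupp.single_apply]
  have hφ : Submodule.span k (Set.range fun μ => coeff μ P) ≤ LinearMap.ker φ := by
    rw [Submodule.span_le]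
    rintro _ ⟨μ, rfl⟩
    have := congrArg (coeff μ) hb
    simp only [coeff_sum, coeff_smul, coeff_zero, smul_eq_mul] at this
    simp [hP, coeff_fromDescent, hφu, mul_comm, this]
  intro i
  rw [← hφu i]
  exact LinearMap.mem_ker.1 (hφ (hspan ▸ Submodule.mem_top))

lemma coeff_aeval_map_mem_span_coeff {τ : Type*} (S : τ → Polynomial k) (P : MvPolynomial τ K)
    (i : ℕ) :
    (aeval (fun q => (S q).map (algebraMap k K)) P).coeff i ∈
      Submodule.span k (Set.range fun μ => coeff μ P) := by
  rw [aeval_eq_eval₂Hom, coe_eval₂Hom, eval₂_eq, Polynomial.finsetSum_coeff]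
  refine Submodule.sum_mem _ fun μ _ => ?_
  simp only [← Polynomial.map_pow, ← Polynomial.map_prod, Polynomial.algebraMap_apply,
    Algebra.algebraMap_self, RingHom.id_apply, Polynomial.coeff_C_mul, Polynomial.coeff_map]
  rw [mul_comm, ← Algebra.smul_def]
  exact Submodule.smul_mem _ _ (Submodule.subset_span ⟨μ, rfl⟩)

lemma coeff_aeval_affine_mem_span_coeff_aeval_genericPoint (u : Module.Basis ι k K)
    (T : MvPolynomial σ K) (a b : σ → K) (i : ℕ) :
    (aeval (fun s => Polynomial.C (a s) * Polynomial.X + Polynomial.C (b s)) T).coeff i ∈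
      Submodule.span k (Set.range fun μ => coeff μ (aeval (genericPoint u) T)) := by
  let S : σ × ι → Polynomial k := fun q =>
    Polynomial.C (u.repr (a q.1) q.2) * Polynomial.X + Polynomial.C (u.repr (b q.1) q.2)
  have hS : ∀ s, aeval (fun q => (S q).map (algebraMap k K)) (genericPoint u s) =
      Polynomial.C (a s) * Polynomial.X + Polynomial.C (b s) := by
    intro s
    conv_rhs => rw [← u.sum_repr (a s), ← u.sum_repr (b s)]
    simp only [genericPoint, map_sum, map_mul, aeval_C, aeval_X, S, Polynomial.map_add,
      Polynomial.map_mul, Polynomial.map_C, Polynomial.map_X, Algebra.smul_def,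
      Polynomial.algebraMap_apply, Algebra.algebraMap_self, RingHom.id_apply,
      Finset.sum_mul, ← Finset.sum_add_distrib]
    exact Finset.sum_congr rfl fun j _ => by ring
  have := coeff_aeval_map_mem_span_coeff S (aeval (genericPoint u) T) i
  simpa only [comp_aeval_apply, hS] using this

theorem span_coeff_aeval_genericPoint_C_mul_prod_X_eq_top [PerfectField K]
    (u : Module.Basis ι k K) {c : K} (hc : c ≠ 0) {τ : Type*} [Fintype τ] [Nonempty τ]
    (vars : τ → σ) :
    Submodule.span k
      (Set.range fun μ => coeff μ (aeval (genericPoint u) (C c * ∏ t, X (vars t)))) = ⊤ := by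
  classical
  set V := Submodule.span k
    (Set.range fun μ => coeff μ (aeval (genericPoint u) (C c * ∏ t, X (vars t))))
  obtain ⟨q, _⟩ := ExpChar.exists K
  obtain ⟨t₀⟩ := ‹Nonempty τ›
  set s₀ := vars t₀
  obtain ⟨v, r, he, hr⟩ := exists_eq_pow_mul_natCast_ne_zero K q
    (Finset.card_ne_zero_of_mem (Finset.mem_filter.2 ⟨Finset.mem_univ t₀, rfl⟩) :
      (Finset.univ.filter fun t => vars t = s₀).card ≠ 0)
  have hr0 : 0 < r := Nat.pos_of_ne_zero (by rintro rfl; simp at hr)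
  have hline : ∀ z : K, aeval (fun s => Polynomial.C (if s = s₀ then 1 else 0) * Polynomial.X
      + Polynomial.C (if s = s₀ then z else 1)) (C c * ∏ t, X (vars t))
      = Polynomial.C c * (Polynomial.X + Polynomial.C z) ^ (q ^ v * r) := by
    intro z
    have hsubst : (fun s => Polynomial.C (if s = s₀ then 1 else 0) * Polynomial.X
        + Polynomial.C (if s = s₀ then z else 1))
        = fun s => if s = s₀ then Polynomial.X + Polynomial.C z else 1 :=
      _root_.funext fun s => by split_ifs <;> simp
    rw [← he, hsubst]
    simp [Finset.prod_ite]
  have hmem : ∀ z : K, c * (r * z ^ q ^ v) ∈ V := by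
    intro z
    have := coeff_aeval_affine_mem_span_coeff_aeval_genericPoint u (C c * ∏ t, X (vars t))
      (fun s => if s = s₀ then 1 else 0) (fun s => if s = s₀ then z else 1) (q ^ v * (r - 1))
    rwa [hline, Polynomial.coeff_C_mul,
      Polynomial.coeff_X_add_C_pow_expChar_pow_mul_s11 q z v hr0] at this
  refine eq_top_iff.2 fun y _ => ?_
  obtain ⟨z, hz⟩ := (bijective_iterateFrobenius K q v).2 ((c * r)⁻¹ * y)
  rw [iterateFrobenius_def] at hz
  convert hmem z using 1
  rw [hz]
  field_simp

end MvPolynomial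

theorem stmt_11_general {k K : Type*} [Field k] [Fintype k] [Field K] [Algebra k K]
    (n d D : ℕ) (hD : 1 ≤ D) (u : Module.Basis (Fin d) k K)
    (cc : K) (hcc : cc ≠ 0) (cm : Fin D → Fin n)
    (a : K)
    (Γa : Matrix (Fin d) (Fin d) k)
    (hΓa : ∀ i : Fin d, a * u i = ∑ j : Fin d, Γa i j • u j)
    (f : Fin d → MvPolynomial (Fin n × Fin d) k)
    (hf : aeval (fun t : Fin n => ∑ j : Fin d, C (u j) * X (t, j))
            (C cc * ∏ t : Fin D, (X (cm t) : MvPolynomial (Fin n) K))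
        = ∑ i : Fin d, C (u i) * MvPolynomial.map (algebraMap k K) (f i))
    (g : Fin d → MvPolynomial (Fin n × Fin d) k)
    (hg : aeval (fun t : Fin n => ∑ j : Fin d, C (u j) * X (t, j))
            (C a * (C cc * ∏ t : Fin D, (X (cm t) : MvPolynomial (Fin n) K)))
        = ∑ i : Fin d, C (u i) * MvPolynomial.map (algebraMap k K) (g i))
    (Γ : Matrix (Fin d) (Fin d) k) :
    (∀ j : Fin d, ∑ i : Fin d, C (Γ j i) * f i = g j) ↔ Γ = Γa.transpose := by
  have : Nonempty (Fin D) := ⟨⟨0, hD⟩⟩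
  have : Finite K := Finite.of_equiv _ u.equivFun.toEquiv.symm
  obtain rfl := eq_sum_C_mul_of_aeval_genericPoint_C_mul u hΓa hf hg
  have hindep := Fintype.linearIndependent_iffₛ.1 <| linearIndependent_of_eq_fromDescent u hf
    (span_coeff_aeval_genericPoint_C_mul_prod_X_eq_top u hcc cm)
  simp only [← smul_eq_C_mul]
  constructor
  · exact fun h => Matrix.ext fun j i => hindep _ _ (h j) i
  · rintro rfl j
    rfl

/-- For a nonconstant term `T = c·m` and `a ≠ 0`, a matrix
`Γ ∈ GL_d(k)` satisfies `Γ·T̂ = (a·T)^` if and only if `Γ = Γ_a^t`, where `Γ_a` is the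
matrix of multiplication by `a` in the basis `u`. -/
theorem stmt_11 {k K : Type*} [Field k] [Fintype k] [Field K] [Algebra k K]
    (n d D : ℕ) (hD : 1 ≤ D) (u : Module.Basis (Fin d) k K)
    (cc : K) (hcc : cc ≠ 0) (cm : Fin D → Fin n)
    (a : K) (ha : a ≠ 0)
    (Γa : Matrix (Fin d) (Fin d) k)
    (hΓa : ∀ i : Fin d, a * u i = ∑ j : Fin d, Γa i j • u j)
    (f : Fin d → MvPolynomial (Fin n × Fin d) k)
    (hf : aeval (fun t : Fin n => ∑ j : Fin d, C (u j) * X (t, j))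
            (C cc * ∏ t : Fin D, (X (cm t) : MvPolynomial (Fin n) K))
        = ∑ i : Fin d, C (u i) * MvPolynomial.map (algebraMap k K) (f i))
    (g : Fin d → MvPolynomial (Fin n × Fin d) k)
    (hg : aeval (fun t : Fin n => ∑ j : Fin d, C (u j) * X (t, j))
            (C a * (C cc * ∏ t : Fin D, (X (cm t) : MvPolynomial (Fin n) K)))
        = ∑ i : Fin d, C (u i) * MvPolynomial.map (algebraMap k K) (g i))
    (Γ : Matrix (Fin d) (Fin d) k) (hΓ : IsUnit Γ) :
    (∀ j : Fin d, ∑ i : Fin d, C (Γ j i) * f i = g j) ↔ Γ = Γa.transpose :=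
  stmt_11_general n d D hD u cc hcc cm a Γa hΓa f hf g hg Γ
end

section
/- Let k be a finite field with q elements, K = F_{q^d} the degree-d extension of k with basis u_1,…,u_d over k. Let F ∈ K[x_1,…,x_n] be a polynomial that is not constant (it contains at least one nonconstant term with nonzero coefficient), let G ∈ K[x_1,…,x_n], and let Γ ∈ GL_d(k). If Γ·F̂ = Ĝ, where F̂ and Ĝ are the descents of F and G with respect to u_1,…,u_d, then there exists a ∈ K, a ≠ 0, such that G = a·F and Γ = Γ_a^t, where Γ_a ∈ Mat_d(k) is the matrix of multiplication by a in the basis u_1,…,u_d. -/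
/-!
In the basis of monomials, the descent of `x^m` is `∏ t, (∑ j, u j * y t j) ^ m t`, which is
weighted homogeneous of weight `m` when `y t j` has weight `t`. Hence `Γ • F̂ = Ĝ` says that the
`k`-linear map `T` with `T (u i) = ∑ j, Γ j i • u j` sends each coefficient of `F_m` times the
descent of `x^m` to the corresponding coefficient for `G_m`. Choosing `m ≠ 0` with `F_m ≠ 0`, the
map `z ↦ T (F_m z) - G_m z` kills every coefficient of the descent of `x^m`. Writing it as a
`K`-combination of Frobenius powers and evaluating at points that invert the Moore matrix
`(u j ^ q ^ l)`, it vanishes, so `T` is multiplication by `a = G_m / F_m`; the other coefficients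
then give `G = a F`, and `a ≠ 0` because `Γ` is invertible.
-/

open MvPolynomial

namespace Module.Basis

variable {ι k K M : Type*} [Fintype ι] [CommSemiring k] [CommSemiring K] [Algebra k K]
  [AddCommMonoid M] [Module k M]

theorem linearMap_eq_sum_smul_coord (u : Basis ι k M) (S : M →ₗ[k] K) :
    S = ∑ j, S (u j) • (Algebra.linearMap k K ∘ₗ u.coord j) := by
  classical
  refine u.ext fun i => ?_
  simp [Finsupp.single_apply]

theorem exists_forall_eq_sum_apply_mul (u : Basis ι k M) (ψ : (M →ₗ[k] K) →ₗ[K] K) :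
    ∃ w : ι → K, ∀ S, ψ S = ∑ j, S (u j) * w j :=
  ⟨fun j => ψ (Algebra.linearMap k K ∘ₗ u.coord j), fun S => by
    conv_lhs => rw [u.linearMap_eq_sum_smul_coord S]
    simp⟩

end Module.Basis

namespace FiniteField

variable (k K : Type*) [Field k] [Fintype k] [Field K] [Algebra k K] [Finite K]

theorem linearIndependent_frobeniusAlgHom_pow :
    LinearIndependent K fun l : Fin (Module.finrank k K) =>
      ((frobeniusAlgHom k K) ^ (l : ℕ)).toLinearMap :=
  (linearIndependent_algHom_toLinearMap k K K).comp _ (bijective_frobeniusAlgHom_pow k K).injective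

noncomputable def frobeniusPowBasis : Module.Basis (Fin (Module.finrank k K)) K (K →ₗ[k] K) :=
  have : Nonempty (Fin (Module.finrank k K)) := Fin.pos_iff_nonempty.mp Module.finrank_pos
  basisOfLinearIndependentOfCardEqFinrank (linearIndependent_frobeniusAlgHom_pow k K)
    (by rw [Fintype.card_fin, Module.finrank_linearMap_self])

theorem frobeniusPowBasis_apply (l : Fin (Module.finrank k K)) (x : K) :
    frobeniusPowBasis k K l x = (frobeniusAlgHom k K ^ (l : ℕ)) x := by
  have : Nonempty (Fin (Module.finrank k K)) := Fin.pos_iff_nonempty.mp Module.finrank_pos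
  simp [frobeniusPowBasis]

end FiniteField

section Descent

variable {σ ι k K : Type*} [Fintype σ] [Fintype ι]

section CommSemiring

variable [CommSemiring k] [CommSemiring K] [Algebra k K]

noncomputable def descentSubst (u : Module.Basis ι k K) (t : σ) : MvPolynomial (σ × ι) K :=
  ∑ j, C (u j) * X (t, j)

noncomputable def descentMonomial (u : Module.Basis ι k K) (m : σ →₀ ℕ) :
    MvPolynomial (σ × ι) K :=
  ∏ t, descentSubst u t ^ m t

theorem eval_map_descentMonomial (u : Module.Basis ι k K) (m : σ →₀ ℕ) (φ : K →+* K)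
    (y : σ × ι → K) :
    eval y (map φ (descentMonomial u m)) = ∏ t, (∑ j, φ (u j) * y (t, j)) ^ m t := by
  simp [descentMonomial, descentSubst]

theorem descentMonomial_ne_zero [Nontrivial K] (u : Module.Basis ι k K) (m : σ →₀ ℕ) :
    descentMonomial u m ≠ 0 := by
  intro h
  have hone : ∑ j, u j * algebraMap k K (u.repr 1 j) = 1 := by
    simpa [Algebra.smul_def, mul_comm] using u.sum_repr 1
  have := congr(eval (fun p : σ × ι => algebraMap k K (u.repr 1 p.2)) $h)
  simp only [descentMonomial, descentSubst, eval_prod, eval_pow, eval_sum, eval_mul, eval_C,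
    eval_X, hone, one_pow, Finset.prod_const_one] at this
  exact one_ne_zero this

noncomputable def descentWeight (p : σ × ι) : σ →₀ ℕ := Finsupp.single p.1 1

theorem isWeightedHomogeneous_descentMonomial (u : Module.Basis ι k K) (m : σ →₀ ℕ) :
    IsWeightedHomogeneous descentWeight (descentMonomial u m) m := by
  have hsubst (t : σ) : IsWeightedHomogeneous descentWeight (descentSubst u t)
      (Finsupp.single t 1) :=
    IsWeightedHomogeneous.sum _ _ _ fun j _ => (isWeightedHomogeneous_X K _ (t, j)).C_mul _
  have := IsWeightedHomogeneous.prod Finset.univ _ _ fun t _ => (hsubst t).pow (m t)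
  simpa [descentMonomial, Finsupp.smul_single, Finsupp.univ_sum_single] using this

theorem coeff_aeval_descentSubst (u : Module.Basis ι k K) (H : MvPolynomial σ K)
    (e : σ × ι →₀ ℕ) :
    coeff e (aeval (descentSubst u) H) =
      coeff (e.weight descentWeight) H * coeff e (descentMonomial u (e.weight descentWeight)) := by
  have hexp : aeval (descentSubst u) H = ∑ m ∈ H.support, C (coeff m H) * descentMonomial u m := by
    conv_lhs => rw [H.as_sum]
    rw [map_sum]
    refine Finset.sum_congr rfl fun m _ => ?_
    rw [aeval_monomial, algebraMap_eq, descentMonomial,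
      Finsupp.prod_fintype _ _ fun _ => pow_zero _]
  rw [hexp, coeff_sum, Finset.sum_eq_single (e.weight descentWeight)]
  · exact coeff_C_mul ..
  · intro m _ hm
    rw [coeff_C_mul, (isWeightedHomogeneous_descentMonomial u m).coeff_eq_zero e (Ne.symm hm),
      mul_zero]
  · intro he
    rw [coeff_C_mul, notMem_support_iff.mp he, zero_mul]

theorem coeff_sum_C_mul_map_algebraMap {τ : Type*} (u : ι → K) (f : ι → MvPolynomial τ k)
    (e : τ →₀ ℕ) :
    coeff e (∑ i, C (u i) * map (algebraMap k K) (f i)) = ∑ i, coeff e (f i) • u i := by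
  simp [coeff_sum, coeff_map, Algebra.smul_def, mul_comm]

theorem coeff_eq_constr_coeff_of_descent {τ : Type*} (u : Module.Basis ι k K)
    {P Q : MvPolynomial τ K} {f g : ι → MvPolynomial τ k}
    (hf : P = ∑ i, C (u i) * map (algebraMap k K) (f i))
    (hg : Q = ∑ i, C (u i) * map (algebraMap k K) (g i))
    (Γ : Matrix ι ι k) (h : ∀ j, ∑ i, C (Γ j i) * f i = g j) (e : τ →₀ ℕ) :
    coeff e Q = u.constr k (fun i => ∑ j, Γ j i • u j) (coeff e P) := by
  rw [hf, hg, coeff_sum_C_mul_map_algebraMap, coeff_sum_C_mul_map_algebraMap]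
  simp only [← h, coeff_sum, coeff_C_mul, map_sum, map_smul, u.constr_basis, Finset.sum_smul,
    Finset.smul_sum, smul_smul]
  rw [Finset.sum_comm]
  simp only [mul_comm]

end CommSemiring

variable [Field k] [Fintype k] [Field K] [Algebra k K]

theorem eq_zero_of_forall_apply_coeff_descentMonomial_eq_zero (u : Module.Basis ι k K)
    {m : σ →₀ ℕ} (hm : m ≠ 0) {S : K →ₗ[k] K}
    (hS : ∀ e, S (coeff e (descentMonomial u m)) = 0) : S = 0 := by
  classical
  have : Module.Finite k K := .of_basis u
  have : Finite K := Module.finite_of_finite k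
  set b := FiniteField.frobeniusPowBasis k K
  set φ : Fin (Module.finrank k K) → K →+* K := fun l =>
    ((FiniteField.frobeniusAlgHom k K ^ (l : ℕ) : K →ₐ[k] K) : K →+* K)
  have hpoly : ∑ l, C (b.repr S l) * map (φ l) (descentMonomial u m) = 0 := by
    ext e
    rw [coeff_zero, ← hS e]
    conv_rhs => rw [← b.sum_repr S]
    simp only [coeff_sum, coeff_C_mul, coeff_map, LinearMap.sum_apply,
      LinearMap.smul_apply, smul_eq_mul, b, FiniteField.frobeniusPowBasis_apply, φ,
      AlgHom.coe_toRingHom]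
  -- `b.coord l₀` is represented by a point `w`, which isolates the `l₀`-th Frobenius power.
  obtain ⟨t, ht⟩ : ∃ t, m t ≠ 0 := Finsupp.ne_iff.mp hm
  refine b.repr.injective (Finsupp.ext fun l₀ => ?_)
  obtain ⟨w, hw⟩ := u.exists_forall_eq_sum_apply_mul (b.coord l₀)
  have hdual (l : Fin (Module.finrank k K)) : ∑ j, φ l (u j) * w j = if l = l₀ then 1 else 0 := by
    simpa [φ, FiniteField.frobeniusPowBasis_apply, b, Finsupp.single_apply] using (hw (b l)).symm
  have := congr(eval (fun p : σ × ι => w p.2) $hpoly)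
  simp only [eval_sum, eval_mul, eval_C, eval_map_descentMonomial, hdual] at this
  rw [Finset.sum_eq_single l₀
    (fun l _ hl => by simp [hl, Finset.prod_eq_zero (Finset.mem_univ t), ht]) (by simp)] at this
  simpa using this

theorem exists_eq_C_mul_of_coeff_aeval_descentSubst (u : Module.Basis ι k K) {T : K →ₗ[k] K}
    {F G : MvPolynomial σ K} (hF : 0 < F.totalDegree)
    (hT : ∀ e, coeff e (aeval (descentSubst u) G) = T (coeff e (aeval (descentSubst u) F))) :
    ∃ a, G = C a * F ∧ ∀ z, T z = a * z := by
  obtain ⟨m, hm, hm0⟩ : ∃ m ∈ F.support, m ≠ 0 := by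
    by_contra! h0
    exact hF.ne' ((totalDegree_eq_zero_iff _ F).mpr fun m hm t => by rw [h0 m hm]; rfl)
  have hkey (m' : σ →₀ ℕ) (e : σ × ι →₀ ℕ) (he : coeff e (descentMonomial u m') ≠ 0) :
      coeff m' G * coeff e (descentMonomial u m') =
        T (coeff m' F * coeff e (descentMonomial u m')) := by
    have hwt := isWeightedHomogeneous_descentMonomial u m' he
    simpa only [coeff_aeval_descentSubst, hwt] using hT e
  have hS : T ∘ₗ LinearMap.mulLeft k (coeff m F) - LinearMap.mulLeft k (coeff m G) = 0 := by
    refine eq_zero_of_forall_apply_coeff_descentMonomial_eq_zero u hm0 fun e => ?_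
    by_cases he : coeff e (descentMonomial u m) = 0
    · simp [he]
    · simp [← hkey m e he]
  have hTa (z : K) : T z = coeff m G / coeff m F * z := by
    have := congr($hS (z / coeff m F))
    simp only [LinearMap.sub_apply, LinearMap.comp_apply, LinearMap.mulLeft_apply,
      LinearMap.zero_apply, sub_eq_zero, mul_div_cancel₀ _ (mem_support_iff.mp hm)] at this
    rw [this, div_mul_eq_mul_div, mul_div_assoc]
  refine ⟨coeff m G / coeff m F, MvPolynomial.ext _ _ fun m' => ?_, hTa⟩
  obtain ⟨e, he⟩ := ne_zero_iff.mp (descentMonomial_ne_zero u m')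
  rw [coeff_C_mul]
  exact mul_right_cancel₀ he ((hkey m' e he).trans (by rw [hTa, mul_assoc]))

end Descent

/-- If `F` is nonconstant, `Γ ∈ GL_d(k)`, and `Γ·F̂ = Ĝ`, then there is
`a ∈ K`, `a ≠ 0`, with `G = a·F` and `Γ = Γ_a^t` (i.e. `a·u_i = Σ_j Γ_{ji} u_j`). -/
theorem stmt_12 {k K : Type*} [Field k] [Fintype k] [Field K] [Algebra k K]
    (n d : ℕ) (u : Module.Basis (Fin d) k K)
    (F G : MvPolynomial (Fin n) K) (hF : 0 < F.totalDegree)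
    (f : Fin d → MvPolynomial (Fin n × Fin d) k)
    (hf : aeval (fun t : Fin n => ∑ j : Fin d, C (u j) * X (t, j)) F
        = ∑ i : Fin d, C (u i) * MvPolynomial.map (algebraMap k K) (f i))
    (g : Fin d → MvPolynomial (Fin n × Fin d) k)
    (hg : aeval (fun t : Fin n => ∑ j : Fin d, C (u j) * X (t, j)) G
        = ∑ i : Fin d, C (u i) * MvPolynomial.map (algebraMap k K) (g i))
    (Γ : Matrix (Fin d) (Fin d) k) (hΓ : IsUnit Γ)
    (h : ∀ j : Fin d, ∑ i : Fin d, C (Γ j i) * f i = g j) :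
    ∃ a : K, a ≠ 0 ∧ G = C a * F ∧
      ∀ i : Fin d, a * u i = ∑ j : Fin d, Γ j i • u j := by
  obtain ⟨a, hGF, hTa⟩ := exists_eq_C_mul_of_coeff_aeval_descentSubst u hF
    (coeff_eq_constr_coeff_of_descent u hf hg Γ h)
  have hΓa (i : Fin d) : a * u i = ∑ j, Γ j i • u j := by rw [← hTa, u.constr_basis]
  refine ⟨a, fun ha => ?_, hGF, hΓa⟩
  have : Nonempty (Fin d) := u.index_nonempty
  have hΓ0 : Γ = 0 := Matrix.ext fun j i => by
    simpa [ha, Finsupp.single_apply] using congr(u.repr $(hΓa i) j).symm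
  exact not_isUnit_zero (hΓ0 ▸ hΓ)
end

section
/- Let n ≥ m ≥ 1 and let R = ℤ[f_0,…,f_n, g_0,…,g_{m−1}] be the polynomial ring over ℤ in the indicated variables. In R[X], let F = Σ_{i=0}^n f_i X^i and G = X^m + Σ_{i=0}^{m−1} g_i X^i, and let Q and Rem be the quotient and remainder of F upon division by the monic polynomial G, so F = Q·G + Rem with deg Rem < m. Then for each i with 0 ≤ i ≤ n−m, the coefficient of X^{n−m−i} in Q is a polynomial of total degree at most i+1 in the variables f_0,…,f_n, g_0,…,g_{m−1}, and each coefficient of Rem has total degree at most n−m+2. -/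
/-!
Comparing coefficients of `X ^ (m + k)` in `F = Q * G + Rem`, where `G` is monic of degree `m`,
gives `Q_k = f_(m+k) - ∑_(b<m) g_b * Q_(m+k-b)`. Every `Q_a` on the right has `a > k`, and every
`g_b` has total degree at most one, so each step down from the top coefficient raises the total
degree by at most one. The remainder coefficients `Rem_j = f_j - ∑ g_b * Q_(j-b)` then cost one
more degree than the worst quotient coefficient.
-/

open Polynomial

namespace Polynomial

open Finset

variable {A : Type*} [CommRing A] {F G : A[X]}

theorem coeff_modByMonic_eq_sub (j : ℕ) :
    (F %ₘ G).coeff j = F.coeff j - ∑ x ∈ antidiagonal j, G.coeff x.1 * (F /ₘ G).coeff x.2 := by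
  have h := congrArg (coeff · j) (modByMonic_add_div F G)
  simp only [coeff_add, coeff_mul] at h
  exact eq_sub_of_add_eq h

theorem coeff_divByMonic_eq_sub (hG : G.Monic) (k : ℕ) :
    (F /ₘ G).coeff k = F.coeff (G.natDegree + k) -
      ∑ x ∈ (antidiagonal (G.natDegree + k)).erase (G.natDegree, k),
        G.coeff x.1 * (F /ₘ G).coeff x.2 := by
  have hrem : (F %ₘ G).coeff (G.natDegree + k) = 0 := by
    nontriviality A
    exact coeff_eq_zero_of_degree_lt <| (degree_modByMonic_lt F hG).trans_le <|
      degree_le_natDegree.trans (by exact_mod_cast Nat.le_add_right _ _)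
  have h := coeff_modByMonic_eq_sub (F := F) (G := G) (G.natDegree + k)
  have hmem : (G.natDegree, k) ∈ antidiagonal (G.natDegree + k) := mem_antidiagonal.mpr rfl
  rw [hrem, ← add_sum_erase _ _ hmem, hG.coeff_natDegree, one_mul] at h
  linear_combination h

end Polynomial

namespace MvPolynomial

open Finset

variable {σ R : Type*}

theorem totalDegree_coeff_sum_C_mul_X_pow_le [CommSemiring R] {ι : Type*} (s : Finset ι)
    (c : ι → MvPolynomial σ R) (φ : ι → ℕ) {d : ℕ} (hc : ∀ i ∈ s, (c i).totalDegree ≤ d)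
    (j : ℕ) : ((∑ i ∈ s, Polynomial.C (c i) * Polynomial.X ^ φ i).coeff j).totalDegree ≤ d := by
  rw [finsetSum_coeff]
  refine totalDegree_finsetSum_le fun i hi => ?_
  rw [coeff_C_mul_X_pow]
  split_ifs
  · exact hc i hi
  · simp

variable [CommRing R] {F G : (MvPolynomial σ R)[X]} {N d e : ℕ}

theorem totalDegree_coeff_divByMonic_le (hG : G.Monic) (hN : F.natDegree - G.natDegree ≤ N)
    (hF : ∀ j, (F.coeff j).totalDegree ≤ d) (hGe : ∀ j, (G.coeff j).totalDegree ≤ e) (k : ℕ) :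
    ((F /ₘ G).coeff k).totalDegree ≤ d + (N - k) * e := by
  induction hi : N - k using Nat.strong_induction_on generalizing k with
  | _ i IH =>
  obtain hNk | hkN := lt_or_ge N k
  · rw [coeff_eq_zero_of_natDegree_lt ((natDegree_divByMonic F hG).trans_le hN |>.trans_lt hNk)]
    simp
  rw [coeff_divByMonic_eq_sub hG]
  refine (totalDegree_sub _ _).trans <|
    max_le ((hF _).trans (Nat.le_add_right _ _)) (totalDegree_finsetSum_le ?_)
  rintro ⟨b, a⟩ hba
  rw [mem_erase, HasAntidiagonal.mem_antidiagonal] at hba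
  obtain hb | rfl | hb := lt_trichotomy b G.natDegree
  · by_cases haN : N < a
    · rw [coeff_eq_zero_of_natDegree_lt ((natDegree_divByMonic F hG).trans_le hN |>.trans_lt haN)]
      simp
    calc (G.coeff b * (F /ₘ G).coeff a).totalDegree
        ≤ e + (d + (N - a) * e) :=
          (totalDegree_mul _ _).trans (add_le_add (hGe b) (IH _ (by omega) a rfl))
      _ = d + (N - a + 1) * e := by ring
      _ ≤ d + i * e := by gcongr; omega
  · exact (hba.1 (Prod.ext rfl (by omega))).elim
  · simp [coeff_eq_zero_of_natDegree_lt hb]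

theorem totalDegree_coeff_modByMonic_le (hG : G.Monic) (hN : F.natDegree - G.natDegree ≤ N)
    (hF : ∀ j, (F.coeff j).totalDegree ≤ d) (hGe : ∀ j, (G.coeff j).totalDegree ≤ e) (j : ℕ) :
    ((F %ₘ G).coeff j).totalDegree ≤ d + (N + 1) * e := by
  rw [coeff_modByMonic_eq_sub]
  refine (totalDegree_sub _ _).trans <|
    max_le ((hF _).trans (Nat.le_add_right _ _)) (totalDegree_finsetSum_le ?_)
  rintro ⟨b, a⟩ -
  calc (G.coeff b * (F /ₘ G).coeff a).totalDegree
      ≤ e + (d + (N - a) * e) :=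
        (totalDegree_mul _ _).trans
          (add_le_add (hGe b) (totalDegree_coeff_divByMonic_le hG hN hF hGe a))
    _ = d + (N - a + 1) * e := by ring
    _ ≤ d + (N + 1) * e := by gcongr; omega

end MvPolynomial

theorem stmt_19_general (n m : ℕ) :
    let F : Polynomial (MvPolynomial (Fin (n + 1) ⊕ Fin m) ℤ) :=
      ∑ i : Fin (n + 1), Polynomial.C (MvPolynomial.X (Sum.inl i)) * Polynomial.X ^ (i : ℕ)
    let G : Polynomial (MvPolynomial (Fin (n + 1) ⊕ Fin m) ℤ) :=
      Polynomial.X ^ m +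
        ∑ i : Fin m, Polynomial.C (MvPolynomial.X (Sum.inr i)) * Polynomial.X ^ (i : ℕ)
    (∀ i : ℕ, i ≤ n - m → ((F /ₘ G).coeff (n - m - i)).totalDegree ≤ i + 1)
    ∧ (∀ j : ℕ, ((F %ₘ G).coeff j).totalDegree ≤ n - m + 2) := by
  intro F G
  have hlow := degree_sum_fin_lt fun i : Fin m ↦
    (MvPolynomial.X (Sum.inr i) : MvPolynomial (Fin (n + 1) ⊕ Fin m) ℤ)
  have hG : G.Monic := monic_X_pow_add hlow
  have hGdeg : G.natDegree = m := by
    rw [natDegree_add_eq_left_of_degree_lt (by rwa [degree_X_pow]), natDegree_X_pow]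
  have hFdeg : F.natDegree ≤ n := natDegree_sum_le_of_forall_le _ _ fun i _ ↦
    (natDegree_C_mul_X_pow_le _ _).trans (Nat.lt_succ_iff.mp i.2)
  have hN : F.natDegree - G.natDegree ≤ n - m := by omega
  have hX : ∀ v, (MvPolynomial.X v : MvPolynomial (Fin (n + 1) ⊕ Fin m) ℤ).totalDegree ≤ 1 :=
    fun v ↦ (MvPolynomial.totalDegree_X v).le
  have hF (j : ℕ) : (F.coeff j).totalDegree ≤ 1 :=
    MvPolynomial.totalDegree_coeff_sum_C_mul_X_pow_le _ _ _ (fun i _ ↦ hX _) j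
  have hGc (j : ℕ) : (G.coeff j).totalDegree ≤ 1 := by
    rw [coeff_add, coeff_X_pow]
    refine (MvPolynomial.totalDegree_add _ _).trans (max_le ?_ ?_)
    · split_ifs <;> simp
    · exact MvPolynomial.totalDegree_coeff_sum_C_mul_X_pow_le _ _ _ (fun i _ ↦ hX _) j
  refine ⟨fun i hi ↦ ?_, fun j ↦ ?_⟩
  · have := MvPolynomial.totalDegree_coeff_divByMonic_le hG hN hF hGc (n - m - i)
    omega
  · have := MvPolynomial.totalDegree_coeff_modByMonic_le hG hN hF hGc j
    omega

/-- Generic polynomial division: dividing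
`F = Σ_{i=0}^n f_i X^i` by the monic `G = X^m + Σ_{i=0}^{m−1} g_i X^i` over
`ℤ[f_0,…,f_n,g_0,…,g_{m−1}]`, the coefficient of `X^{n−m−i}` in the quotient has total
degree at most `i+1`, and every coefficient of the remainder has total degree at most
`n−m+2`. -/
theorem stmt_19 (n m : ℕ) (hm : 1 ≤ m) (hmn : m ≤ n) :
    let F : Polynomial (MvPolynomial (Fin (n + 1) ⊕ Fin m) ℤ) :=
      ∑ i : Fin (n + 1), Polynomial.C (MvPolynomial.X (Sum.inl i)) * Polynomial.X ^ (i : ℕ)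
    let G : Polynomial (MvPolynomial (Fin (n + 1) ⊕ Fin m) ℤ) :=
      Polynomial.X ^ m +
        ∑ i : Fin m, Polynomial.C (MvPolynomial.X (Sum.inr i)) * Polynomial.X ^ (i : ℕ)
    (∀ i : ℕ, i ≤ n - m → ((F /ₘ G).coeff (n - m - i)).totalDegree ≤ i + 1)
    ∧ (∀ j : ℕ, ((F %ₘ G).coeff j).totalDegree ≤ n - m + 2) :=
  stmt_19_general n m
end
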